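/- (Linear convergence of RSD, strongly convex case.) Under the setting of the RSD algorithm — A x^0 = b, M symmetric positive semidefinite and positive definite on ker(A), f differentiable with f(y) ≤ f(x) + ⟨∇f(x), y−x⟩ + ½(y−x)^T M(y−x) for x, y ∈ x^0 + ker(A), S^k i.i.d. from a finite distribution with Z = Σ_i P_i Z_{S_i} positive definite on ker(A), x^{k+1} = x^k − Z_{S^k} ∇f(x^k) — suppose additionally that f satisfies the strong convexity inequality f(x) ≥ f(y) + ⟨∇f(y), x−y⟩ + (σ_Z/2)(x−y)^T Z†(x−y) for all x, y ∈ x^0 + ker(A) with σ_Z > 0, and let f* be the minimum of f over {x : Ax = b}. Then for every k ≥ 0, the expected objective value satisfies E[f(x^k)] − f* ≤ (1 − σ_Z)^k (f(x^0) − f*). -/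

import Mathlib

/-!
Each sketch step is an `M`-orthogonal projection: `Z_S` is symmetric with `Z_S M Z_S = Z_S` and
`A Z_S = 0`, so the iterates stay feasible and the smoothness bound gives the expected decrease
`E f(x - Z_S ∇f(x)) ≤ f(x) - ½ ∇f(x)ᵀ Z ∇f(x)`. Since `Z` maps into `ker A` and is positive
definite there, `x* - x = Z w` for some `w`; completing the square in the strong convexity
inequality at `x*` gives the Polyak–Łojasiewicz bound `∇f(x)ᵀ Z ∇f(x) ≥ 2σ (f(x) - f*)`. Hence the
gap `f - f*` contracts by the factor `1 - σ` in expectation at each step, and conditioning on the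
first `k` sketches iterates the contraction.
-/

open Matrix

-- The Moore–Penrose pseudoinverse of a real matrix, defined via the four
-- Penrose conditions (which have a unique solution for every real matrix).
open Classical in
noncomputable def mpinv {k l : Type*} [Fintype k] [Fintype l] (B : Matrix k l ℝ) :
    Matrix l k ℝ :=
  if h : ∃ X : Matrix l k ℝ,
      B * X * B = B ∧ X * B * X = X ∧ (B * X)ᵀ = B * X ∧ (X * B)ᵀ = X * B
  then h.choose else 0

/-- `P_S = I - (AS)†(AS)`, the orthogonal projection onto `ker(AS)`. -/
noncomputable def Pmat {m n p : ℕ} (A : Matrix (Fin m) (Fin n) ℝ)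
    (S : Matrix (Fin n) (Fin p) ℝ) : Matrix (Fin p) (Fin p) ℝ :=
  1 - mpinv (A * S) * (A * S)

/-- `Z_S = S P_S (P_Sᵀ Sᵀ M S P_S)† P_Sᵀ Sᵀ`. -/
noncomputable def Zmat {m n p : ℕ} (A : Matrix (Fin m) (Fin n) ℝ)
    (M : Matrix (Fin n) (Fin n) ℝ) (S : Matrix (Fin n) (Fin p) ℝ) :
    Matrix (Fin n) (Fin n) ℝ :=
  S * Pmat A S * mpinv ((Pmat A S)ᵀ * Sᵀ * M * S * Pmat A S) * (Pmat A S)ᵀ * Sᵀ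

/-- The gradient of `f : ℝ^n → ℝ`, as a vector of partial derivatives. -/
noncomputable def gradv {n : ℕ} (f : (Fin n → ℝ) → ℝ) (x : Fin n → ℝ) : Fin n → ℝ :=
  fun i => fderiv ℝ f x (Pi.single i 1)

section PenroseInverse

variable {k l : Type*} [Fintype k] [Fintype l]

def IsPenroseInverse (B : Matrix k l ℝ) (X : Matrix l k ℝ) : Prop :=
  B * X * B = B ∧ X * B * X = X ∧ (B * X)ᵀ = B * X ∧ (X * B)ᵀ = X * B

/-- The witness is `C` with its nonzero eigenvalues inverted. -/
theorem exists_symm_commute_pinv_of_transpose_eq [DecidableEq l] {C : Matrix l l ℝ}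
    (hC : Cᵀ = C) : ∃ Y : Matrix l l ℝ, C * Y * C = C ∧ Y * C * Y = Y ∧ Yᵀ = Y ∧ Commute C Y := by
  have hsa : IsSelfAdjoint C := by
    rw [IsSelfAdjoint, star_eq_conjTranspose, conjTranspose_eq_transpose_of_trivial, hC]
  have hmul (g h : ℝ → ℝ) : cfc (fun x => g x * h x) C = cfc g C * cfc h C :=
    cfc_mul g h C (C.finite_real_spectrum.continuousOn g) (C.finite_real_spectrum.continuousOn h)
  refine ⟨cfc (fun x : ℝ => x⁻¹) C, ?_, ?_, ?_, ?_⟩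
  · calc C * cfc (fun x : ℝ => x⁻¹) C * C = cfc (fun x => x * x⁻¹ * x) C := by
          rw [hmul, hmul, cfc_id' ℝ C]
      _ = C := (cfc_congr fun x _ => by simp).trans (cfc_id' ℝ C)
  · calc cfc (fun x : ℝ => x⁻¹) C * C * cfc (fun x : ℝ => x⁻¹) C
          = cfc (fun x => x⁻¹ * x * x⁻¹) C := by rw [hmul, hmul, cfc_id' ℝ C]
      _ = _ := cfc_congr fun x _ => by by_cases h : x = 0 <;> simp [h]
  · simpa [IsSelfAdjoint, star_eq_conjTranspose, conjTranspose_eq_transpose_of_trivial]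
      using (cfc_predicate (fun x : ℝ => x⁻¹) C : IsSelfAdjoint _)
  · simpa only [cfc_id' ℝ C] using cfc_commute_cfc (fun x : ℝ => x) (fun x : ℝ => x⁻¹) C

theorem mul_eq_zero_of_transpose_mul_self_mul_eq_zero {m : Type*} [Fintype m]
    {B : Matrix k l ℝ} {E : Matrix l m ℝ} (hE : Bᵀ * B * E = 0) : B * E = 0 := by
  refine conjTranspose_mul_self_eq_zero.mp ?_
  rw [conjTranspose_eq_transpose_of_trivial, transpose_mul, Matrix.mul_assoc,
    ← Matrix.mul_assoc Bᵀ, hE, Matrix.mul_zero]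

/-- `B† = (BᵀB)† Bᵀ`. -/
theorem exists_isPenroseInverse (B : Matrix k l ℝ) : ∃ X, IsPenroseInverse B X := by
  classical
  have hCt : (Bᵀ * B)ᵀ = Bᵀ * B := by rw [transpose_mul, transpose_transpose]
  obtain ⟨Y, hCYC, hYCY, hYt, hcomm⟩ := exists_symm_commute_pinv_of_transpose_eq hCt
  have hBYC : B * Y * (Bᵀ * B) = B := by
    have h := mul_eq_zero_of_transpose_mul_self_mul_eq_zero (B := B) (E := Y * (Bᵀ * B) - 1)
      (by rw [Matrix.mul_sub, Matrix.mul_one, ← Matrix.mul_assoc, hCYC, sub_self])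
    rwa [Matrix.mul_sub, Matrix.mul_one, sub_eq_zero, ← Matrix.mul_assoc] at h
  refine ⟨Y * Bᵀ, ?_, ?_, ?_, ?_⟩
  · simpa only [Matrix.mul_assoc] using hBYC
  · simpa only [Matrix.mul_assoc] using congrArg (· * Bᵀ) hYCY
  · simp only [transpose_mul, transpose_transpose, hYt, Matrix.mul_assoc]
  · rw [Matrix.mul_assoc, transpose_mul, hCt, hYt]
    exact hcomm.eq

theorem IsPenroseInverse.eq {B : Matrix k l ℝ} {X Y : Matrix l k ℝ}
    (hX : IsPenroseInverse B X) (hY : IsPenroseInverse B Y) : X = Y := by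
  obtain ⟨hX1, hX2, hX3, hX4⟩ := hX
  obtain ⟨hY1, hY2, hY3, hY4⟩ := hY
  have hBX : B * X = B * Y := by
    calc B * X = ((B * Y) * (B * X))ᵀ := by rw [← Matrix.mul_assoc, hY1, hX3]
      _ = (B * X * B) * Y := by
          rw [transpose_mul, hX3, hY3]; simp only [Matrix.mul_assoc]
      _ = B * Y := by rw [hX1]
  have hXB : X * B = Y * B := by
    calc X * B = ((X * B) * (Y * B))ᵀ := by rw [Matrix.mul_assoc X, ← Matrix.mul_assoc B, hY1, hX4]
      _ = Y * (B * X * B) := by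
          rw [transpose_mul, hX4, hY4]; simp only [Matrix.mul_assoc]
      _ = Y * B := by rw [hX1]
  calc X = X * B * X := hX2.symm
    _ = Y * B * Y := by rw [Matrix.mul_assoc, hBX, ← Matrix.mul_assoc, hXB]
    _ = Y := hY2

theorem isPenroseInverse_mpinv (B : Matrix k l ℝ) : IsPenroseInverse B (mpinv B) := by
  have h := exists_isPenroseInverse B
  unfold IsPenroseInverse at h ⊢
  rw [mpinv, dif_pos h]
  exact h.choose_spec

theorem IsPenroseInverse.transpose {B : Matrix k l ℝ} {X : Matrix l k ℝ}
    (hX : IsPenroseInverse B X) : IsPenroseInverse Bᵀ Xᵀ := by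
  obtain ⟨h1, h2, h3, h4⟩ := hX
  refine ⟨?_, ?_, ?_, ?_⟩
  · rw [← transpose_mul, ← transpose_mul, ← Matrix.mul_assoc, h1]
  · rw [← transpose_mul, ← transpose_mul, ← Matrix.mul_assoc, h2]
  · rw [← transpose_mul, transpose_transpose, h4]
  · rw [← transpose_mul, transpose_transpose, h3]

theorem mpinv_transpose_of_transpose_eq {C : Matrix l l ℝ} (hC : Cᵀ = C) :
    (mpinv C)ᵀ = mpinv C :=
  (hC ▸ (isPenroseInverse_mpinv C).transpose).eq (isPenroseInverse_mpinv C)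

end PenroseInverse

theorem Matrix.PosSemidef.transpose_eq {n : Type*} {M : Matrix n n ℝ} (hM : M.PosSemidef) :
    Mᵀ = M := by
  simpa [conjTranspose_eq_transpose_of_trivial] using hM.1.eq

theorem dotProduct_mulVec_of_transpose_eq {n : Type*} [Fintype n] {Q : Matrix n n ℝ}
    (hQ : Qᵀ = Q) (v w : n → ℝ) : v ⬝ᵥ Q *ᵥ w = (Q *ᵥ v) ⬝ᵥ w := by
  rw [dotProduct_mulVec, ← mulVec_transpose, hQ]

section SketchMatrices

variable {m n p : ℕ} (A : Matrix (Fin m) (Fin n) ℝ) (M : Matrix (Fin n) (Fin n) ℝ)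
  (S : Matrix (Fin n) (Fin p) ℝ)

theorem mul_mul_pmat_eq_zero : A * S * Pmat A S = 0 := by
  rw [Pmat, Matrix.mul_sub, Matrix.mul_one, ← Matrix.mul_assoc, (isPenroseInverse_mpinv _).1,
    sub_self]

theorem mul_zmat_eq_zero : A * Zmat A M S = 0 := by
  simp only [Zmat, ← Matrix.mul_assoc, mul_mul_pmat_eq_zero, Matrix.zero_mul]

variable {M}

theorem zmat_transpose (hM : Mᵀ = M) : (Zmat A M S)ᵀ = Zmat A M S := by
  unfold Zmat
  set W := mpinv ((Pmat A S)ᵀ * Sᵀ * M * S * Pmat A S)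
  have hW : Wᵀ = W := mpinv_transpose_of_transpose_eq <| by
    simp only [transpose_mul, transpose_transpose, hM, Matrix.mul_assoc]
  simp only [transpose_mul, transpose_transpose, hW, Matrix.mul_assoc]

theorem zmat_mul_mul_zmat : Zmat A M S * M * Zmat A M S = Zmat A M S := by
  set K := (Pmat A S)ᵀ * Sᵀ * M * S * Pmat A S
  calc Zmat A M S * M * Zmat A M S
      = S * Pmat A S * (mpinv K * K * mpinv K) * (Pmat A S)ᵀ * Sᵀ := by
        simp only [Zmat, K, Matrix.mul_assoc]
    _ = Zmat A M S := by rw [(isPenroseInverse_mpinv K).2.1]; rfl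

/-- `Z_S = Z_Sᵀ M Z_S`. -/
theorem posSemidef_zmat (hM : M.PosSemidef) : (Zmat A M S).PosSemidef := by
  have h := hM.conjTranspose_mul_mul_same (Zmat A M S)
  rwa [conjTranspose_eq_transpose_of_trivial, zmat_transpose A S hM.transpose_eq,
    zmat_mul_mul_zmat] at h

end SketchMatrices

theorem exists_mulVec_eq_of_mul_eq_zero {m n : Type*} [Fintype m] [Fintype n]
    {A : Matrix m n ℝ} {Z : Matrix n n ℝ} (hAZ : A * Z = 0)
    (hpd : ∀ u, A *ᵥ u = 0 → u ≠ 0 → 0 < u ⬝ᵥ Z *ᵥ u) {h : n → ℝ} (hh : A *ᵥ h = 0) :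
    ∃ w, Z *ᵥ w = h := by
  set K := LinearMap.ker A.mulVecLin
  have hmaps : ∀ x ∈ K, Z.mulVecLin x ∈ K := fun x _ => by
    simp [K, mulVec_mulVec, hAZ]
  have hinj : Set.InjOn Z.mulVecLin K := by
    intro u hu v hv huv
    by_contra hne
    have hker : A *ᵥ (u - v) = 0 := by
      simp only [K, SetLike.mem_coe, LinearMap.mem_ker, mulVecLin_apply] at hu hv
      rw [mulVec_sub, hu, hv, sub_self]
    have hpos := hpd (u - v) hker (sub_ne_zero.mpr hne)
    simp only [mulVecLin_apply] at huv
    rw [mulVec_sub, huv, sub_self, dotProduct_zero] at hpos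
    exact lt_irrefl 0 hpos
  obtain ⟨w, -, hw⟩ := (LinearMap.injOn_iff_surjOn hmaps).mp hinj (show h ∈ K from hh)
  exact ⟨w, hw⟩

/-- Completing the square `0 ≤ (g + σw)ᵀ Z (g + σw)` in the strong convexity inequality
at `x = y + Zw` yields the Polyak–Łojasiewicz inequality. -/
theorem two_mul_sub_le_of_strongConvex {n : ℕ} {f : (Fin n → ℝ) → ℝ}
    {Z : Matrix (Fin n) (Fin n) ℝ} (hZ : Z.PosSemidef) {σ : ℝ} (hσ : 0 < σ)
    {x y w : Fin n → ℝ} (hw : Z *ᵥ w = x - y)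
    (hsc : f x ≥ f y + gradv f y ⬝ᵥ (x - y) + σ / 2 * ((x - y) ⬝ᵥ mpinv Z *ᵥ (x - y))) :
    2 * σ * (f y - f x) ≤ gradv f y ⬝ᵥ Z *ᵥ gradv f y := by
  set g := gradv f y
  have hZt := hZ.transpose_eq
  have hpinv : (x - y) ⬝ᵥ mpinv Z *ᵥ (x - y) = w ⬝ᵥ Z *ᵥ w := by
    rw [← hw, mulVec_mulVec, ← dotProduct_mulVec_of_transpose_eq hZt, mulVec_mulVec,
      ← Matrix.mul_assoc, (isPenroseInverse_mpinv Z).1]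
  have hsq : 0 ≤ g ⬝ᵥ Z *ᵥ g + 2 * σ * (g ⬝ᵥ Z *ᵥ w) + σ ^ 2 * (w ⬝ᵥ Z *ᵥ w) := by
    have h := hZ.dotProduct_mulVec_nonneg (g + σ • w)
    have hswap : w ⬝ᵥ Z *ᵥ g = g ⬝ᵥ Z *ᵥ w := by
      rw [dotProduct_mulVec_of_transpose_eq hZt, dotProduct_comm]
    simp only [star_trivial, mulVec_add, mulVec_smul, add_dotProduct, dotProduct_add,
      smul_dotProduct, dotProduct_smul, smul_eq_mul, hswap] at h
    linarith
  rw [hpinv, ← hw] at hsc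
  nlinarith [mul_le_mul_of_nonneg_left hsc (by positivity : (0 : ℝ) ≤ 2 * σ)]

section Descent

variable {m n p : ℕ} {A : Matrix (Fin m) (Fin n) ℝ} {M : Matrix (Fin n) (Fin n) ℝ}

theorem mulVec_sub_zmat_mulVec (S : Matrix (Fin n) (Fin p) ℝ) (x v : Fin n → ℝ) :
    A *ᵥ (x - Zmat A M S *ᵥ v) = A *ᵥ x := by
  rw [mulVec_sub, mulVec_mulVec, mul_zmat_eq_zero, zero_mulVec, sub_zero]

variable {b : Fin m → ℝ} {f : (Fin n → ℝ) → ℝ}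

theorem apply_sub_zmat_mulVec_gradv_le (hM : Mᵀ = M)
    (hsmooth : ∀ x y : Fin n → ℝ, A *ᵥ x = b → A *ᵥ y = b →
      f y ≤ f x + gradv f x ⬝ᵥ (y - x) + (1 / 2) * ((y - x) ⬝ᵥ M *ᵥ (y - x)))
    (S : Matrix (Fin n) (Fin p) ℝ) {x : Fin n → ℝ} (hx : A *ᵥ x = b) :
    f (x - Zmat A M S *ᵥ gradv f x) ≤ f x - 1 / 2 * (gradv f x ⬝ᵥ Zmat A M S *ᵥ gradv f x) := by
  set g := gradv f x with hg
  have h := hsmooth x (x - Zmat A M S *ᵥ g) hx (by rw [mulVec_sub_zmat_mulVec, hx])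
  have hMquad : (Zmat A M S *ᵥ g) ⬝ᵥ M *ᵥ (Zmat A M S *ᵥ g) = g ⬝ᵥ Zmat A M S *ᵥ g := by
    rw [← dotProduct_mulVec_of_transpose_eq (zmat_transpose A S hM), mulVec_mulVec,
      mulVec_mulVec, zmat_mul_mul_zmat]
  simp only [sub_sub_cancel_left, mulVec_neg, dotProduct_neg, neg_dotProduct, neg_neg, hMquad,
    ← hg] at h
  linarith

theorem sum_mul_apply_sub_zmat_mulVec_gradv_le (hM : Mᵀ = M)
    (hsmooth : ∀ x y : Fin n → ℝ, A *ᵥ x = b → A *ᵥ y = b →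
      f y ≤ f x + gradv f x ⬝ᵥ (y - x) + (1 / 2) * ((y - x) ⬝ᵥ M *ᵥ (y - x)))
    {N : ℕ} {p : Fin N → ℕ} (S : ∀ i : Fin N, Matrix (Fin n) (Fin (p i)) ℝ) {P : Fin N → ℝ}
    (hP : ∀ i, 0 ≤ P i) (hPsum : ∑ i, P i = 1) {x : Fin n → ℝ} (hx : A *ᵥ x = b) :
    ∑ i, P i * f (x - Zmat A M (S i) *ᵥ gradv f x) ≤
      f x - 1 / 2 * (gradv f x ⬝ᵥ (∑ i, P i • Zmat A M (S i)) *ᵥ gradv f x) := by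
  set g := gradv f x
  calc ∑ i, P i * f (x - Zmat A M (S i) *ᵥ g)
      ≤ ∑ i, P i * (f x - 1 / 2 * (g ⬝ᵥ Zmat A M (S i) *ᵥ g)) :=
        Finset.sum_le_sum fun i _ =>
          mul_le_mul_of_nonneg_left (apply_sub_zmat_mulVec_gradv_le hM hsmooth (S i) hx) (hP i)
    _ = f x - 1 / 2 * (g ⬝ᵥ (∑ i, P i • Zmat A M (S i)) *ᵥ g) := by
        simp only [sum_mulVec, dotProduct_sum, smul_mulVec, dotProduct_smul, smul_eq_mul,
          mul_sub, Finset.sum_sub_distrib, ← Finset.sum_mul, hPsum, Finset.mul_sum]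
        ring_nf

end Descent

theorem sum_mul_sub_const {ι : Type*} [Fintype ι] {w : ι → ℝ} (hw : ∑ i, w i = 1)
    (a : ι → ℝ) (c : ℝ) : ∑ i, w i * (a i - c) = ∑ i, w i * a i - c := by
  simp only [mul_sub, Finset.sum_sub_distrib, ← Finset.sum_mul, hw, one_mul]

/-- With `r < 0`, the hypotheses force `e = 0`. -/
theorem le_pow_mul_of_succ_le_mul {e : ℕ → ℝ} {r : ℝ} (he : ∀ k, 0 ≤ e k)
    (hstep : ∀ k, e (k + 1) ≤ r * e k) (k : ℕ) : e k ≤ r ^ k * e 0 := by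
  rcases le_or_gt 0 r with hr | hr
  · induction k with
    | zero => simp
    | succ k ih =>
      calc e (k + 1) ≤ r * e k := hstep k
        _ ≤ r * (r ^ k * e 0) := mul_le_mul_of_nonneg_left ih hr
        _ = r ^ (k + 1) * e 0 := by ring
  · have he0 : e 0 = 0 := by nlinarith [hstep 0, he 0, he 1]
    cases k with
    | zero => simp
    | succ k => rw [he0, mul_zero]; nlinarith [hstep k, he k]

section RandomPaths

variable {α : Type*} [Fintype α] {P : α → ℝ}

theorem sum_prod_eq_one (hPsum : ∑ i, P i = 1) (k : ℕ) :
    ∑ ω : Fin k → α, ∏ j, P (ω j) = 1 := by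
  simpa [hPsum] using (Finset.prod_univ_sum (fun _ : Fin k => Finset.univ) fun _ i => P i).symm

theorem sum_prod_mul_fin_succ (k : ℕ) (F : (Fin (k + 1) → α) → ℝ) :
    ∑ ω : Fin (k + 1) → α, (∏ j, P (ω j)) * F ω =
      ∑ ω : Fin k → α, (∏ j, P (ω j)) * ∑ i, P i * F (Fin.snoc ω i) := by
  rw [← (Fin.snocEquiv fun _ => α).sum_comp, Fintype.sum_prod_type, Finset.sum_comm]
  refine Finset.sum_congr rfl fun ω _ => ?_
  rw [Finset.mul_sum]
  refine Finset.sum_congr rfl fun i _ => ?_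
  simp only [Fin.snocEquiv, Equiv.coe_fn_mk, Fin.prod_univ_castSucc, Fin.snoc_castSucc,
    Fin.snoc_last]
  ring

theorem sum_prod_mul_le_pow_mul {β : Type*} (hP : ∀ i, 0 ≤ P i) {D : Set β} {T : α → β → β}
    (hT : ∀ i, ∀ x ∈ D, T i x ∈ D) {V : β → ℝ} (hV : ∀ x ∈ D, 0 ≤ V x) {r : ℝ}
    (hVT : ∀ x ∈ D, ∑ i, P i * V (T i x) ≤ r * V x)
    (X : ∀ k : ℕ, (Fin k → α) → β) {x0 : β} (hx0 : x0 ∈ D) (hX0 : ∀ ω, X 0 ω = x0)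
    (hXstep : ∀ (k : ℕ) (ω : Fin (k + 1) → α),
      X (k + 1) ω = T (ω (Fin.last k)) (X k fun j => ω j.castSucc))
    (k : ℕ) :
    ∑ ω : Fin k → α, (∏ j, P (ω j)) * V (X k ω) ≤ r ^ k * V x0 := by
  have hXsnoc (k : ℕ) (ω : Fin k → α) (i : α) : X (k + 1) (Fin.snoc ω i) = T i (X k ω) := by
    simp only [hXstep, Fin.snoc_castSucc, Fin.snoc_last]
  have hD (k : ℕ) (ω : Fin k → α) : X k ω ∈ D := by
    induction k with
    | zero => exact hX0 ω ▸ hx0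
    | succ k ih => exact hXstep k ω ▸ hT _ _ (ih _)
  have hw (k : ℕ) (ω : Fin k → α) : 0 ≤ ∏ j, P (ω j) := Finset.prod_nonneg fun j _ => hP _
  have h0 : ∑ ω : Fin 0 → α, (∏ j, P (ω j)) * V (X 0 ω) = V x0 := by simp [hX0]
  rw [← h0]
  refine le_pow_mul_of_succ_le_mul (e := fun k => ∑ ω : Fin k → α, (∏ j, P (ω j)) * V (X k ω))
    (fun k => ?_) (fun k => ?_) k
  · refine Finset.sum_nonneg fun ω _ => ?_
    exact mul_nonneg (hw k ω) (hV _ (hD k ω))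
  · simp only [sum_prod_mul_fin_succ, hXsnoc]
    rw [Finset.mul_sum _ _ r]
    refine Finset.sum_le_sum fun ω _ => ?_
    calc (∏ j, P (ω j)) * ∑ i, P i * V (T i (X k ω))
        ≤ (∏ j, P (ω j)) * (r * V (X k ω)) :=
          mul_le_mul_of_nonneg_left (hVT _ (hD k ω)) (hw k ω)
      _ = r * ((∏ j, P (ω j)) * V (X k ω)) := by ring

end RandomPaths

theorem stmt11_general {m n N : ℕ} (A : Matrix (Fin m) (Fin n) ℝ) (b : Fin m → ℝ)
    (x0 : Fin n → ℝ) (hx0 : A.mulVec x0 = b)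
    (M : Matrix (Fin n) (Fin n) ℝ) (hM : M.PosSemidef)
    (f : (Fin n → ℝ) → ℝ)
    (hsmooth : ∀ x y : Fin n → ℝ, A.mulVec x = b → A.mulVec y = b →
      f y ≤ f x + gradv f x ⬝ᵥ (y - x) + (1 / 2) * ((y - x) ⬝ᵥ M.mulVec (y - x)))
    (p : Fin N → ℕ) (S : ∀ i : Fin N, Matrix (Fin n) (Fin (p i)) ℝ)
    (P : Fin N → ℝ) (hP : ∀ i, 0 ≤ P i) (hPsum : ∑ i, P i = 1)
    (Z : Matrix (Fin n) (Fin n) ℝ) (hZ : Z = ∑ i, P i • Zmat A M (S i))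
    (hpd : ∀ u : Fin n → ℝ, A.mulVec u = 0 → u ≠ 0 → 0 < u ⬝ᵥ Z.mulVec u)
    (σZ : ℝ) (hσ : 0 < σZ)
    (hsc : ∀ x y : Fin n → ℝ, A.mulVec x = b → A.mulVec y = b →
      f x ≥ f y + gradv f y ⬝ᵥ (x - y) +
        (σZ / 2) * ((x - y) ⬝ᵥ (mpinv Z).mulVec (x - y)))
    (fstar : ℝ) (hfs : ∀ x : Fin n → ℝ, A.mulVec x = b → fstar ≤ f x)
    (hfattained : ∃ xs : Fin n → ℝ, A.mulVec xs = b ∧ f xs = fstar)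
    (X : ∀ k : ℕ, (Fin k → Fin N) → (Fin n → ℝ))
    (hX0 : ∀ ω : Fin 0 → Fin N, X 0 ω = x0)
    (hXstep : ∀ (k : ℕ) (ω : Fin (k + 1) → Fin N),
      X (k + 1) ω = X k (fun j => ω j.castSucc) -
        (Zmat A M (S (ω (Fin.last k)))).mulVec (gradv f (X k (fun j => ω j.castSucc))))
    (k : ℕ) :
    (∑ ω : Fin k → Fin N, (∏ j, P (ω j)) * f (X k ω)) - fstar ≤
      (1 - σZ) ^ k * (f x0 - fstar) := by
  obtain ⟨xs, hxs, rfl⟩ := hfattained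
  have hZpsd : Z.PosSemidef :=
    hZ ▸ posSemidef_sum _ fun i _ => (posSemidef_zmat A (S i) hM).smul (hP i)
  have hAZ : A * Z = 0 := by
    rw [hZ, Matrix.mul_sum]
    exact Finset.sum_eq_zero fun i _ => by rw [Matrix.mul_smul, mul_zmat_eq_zero, smul_zero]
  have hcontract : ∀ x ∈ {x | A *ᵥ x = b},
      ∑ i, P i * (f (x - Zmat A M (S i) *ᵥ gradv f x) - f xs) ≤ (1 - σZ) * (f x - f xs) := by
    intro x hx
    obtain ⟨w, hw⟩ := exists_mulVec_eq_of_mul_eq_zero hAZ hpd (h := xs - x)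
      (by rw [mulVec_sub, hxs, hx, sub_self])
    have hdescent :=
      sum_mul_apply_sub_zmat_mulVec_gradv_le hM.transpose_eq hsmooth S hP hPsum hx
    have hpl := two_mul_sub_le_of_strongConvex hZpsd hσ hw (hsc xs x hxs hx)
    rw [← hZ] at hdescent
    rw [sum_mul_sub_const hPsum]
    linarith
  have h := sum_prod_mul_le_pow_mul hP (fun i x hx => (mulVec_sub_zmat_mulVec _ x _).trans hx)
    (fun x hx => sub_nonneg.2 (hfs x hx)) hcontract X hx0 hX0 hXstep k
  rwa [sum_mul_sub_const (sum_prod_eq_one hPsum k)] at h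

/-- linear convergence of RSD in the smooth strongly convex case:
`E[f(x^k)] − f* ≤ (1 − σ_Z)^k (f(x⁰) − f*)`. -/
theorem stmt11 {m n N : ℕ} (A : Matrix (Fin m) (Fin n) ℝ) (b : Fin m → ℝ)
    (x0 : Fin n → ℝ) (hx0 : A.mulVec x0 = b)
    (M : Matrix (Fin n) (Fin n) ℝ) (hM : M.PosSemidef)
    (hMpd : ∀ u : Fin n → ℝ, A.mulVec u = 0 → u ≠ 0 → 0 < u ⬝ᵥ M.mulVec u)
    (f : (Fin n → ℝ) → ℝ) (hdiff : Differentiable ℝ f)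
    (hsmooth : ∀ x y : Fin n → ℝ, A.mulVec x = b → A.mulVec y = b →
      f y ≤ f x + gradv f x ⬝ᵥ (y - x) + (1 / 2) * ((y - x) ⬝ᵥ M.mulVec (y - x)))
    (p : Fin N → ℕ) (S : ∀ i : Fin N, Matrix (Fin n) (Fin (p i)) ℝ)
    (P : Fin N → ℝ) (hP : ∀ i, 0 ≤ P i) (hPsum : ∑ i, P i = 1)
    (Z : Matrix (Fin n) (Fin n) ℝ) (hZ : Z = ∑ i, P i • Zmat A M (S i))
    (hpd : ∀ u : Fin n → ℝ, A.mulVec u = 0 → u ≠ 0 → 0 < u ⬝ᵥ Z.mulVec u)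
    (σZ : ℝ) (hσ : 0 < σZ)
    (hsc : ∀ x y : Fin n → ℝ, A.mulVec x = b → A.mulVec y = b →
      f x ≥ f y + gradv f y ⬝ᵥ (x - y) +
        (σZ / 2) * ((x - y) ⬝ᵥ (mpinv Z).mulVec (x - y)))
    (fstar : ℝ) (hfs : ∀ x : Fin n → ℝ, A.mulVec x = b → fstar ≤ f x)
    (hfattained : ∃ xs : Fin n → ℝ, A.mulVec xs = b ∧ f xs = fstar)
    (X : ∀ k : ℕ, (Fin k → Fin N) → (Fin n → ℝ))
    (hX0 : ∀ ω : Fin 0 → Fin N, X 0 ω = x0)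
    (hXstep : ∀ (k : ℕ) (ω : Fin (k + 1) → Fin N),
      X (k + 1) ω = X k (fun j => ω j.castSucc) -
        (Zmat A M (S (ω (Fin.last k)))).mulVec (gradv f (X k (fun j => ω j.castSucc))))
    (k : ℕ) :
    (∑ ω : Fin k → Fin N, (∏ j, P (ω j)) * f (X k ω)) - fstar ≤
      (1 - σZ) ^ k * (f x0 - fstar) :=
  stmt11_general A b x0 hx0 M hM f hsmooth p S P hP hPsum Z hZ hpd σZ hσ hsc fstar hfs hfattained X
    hX0 hXstep k
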